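/- Let V be a finite vertex set, let k be a positive integer, and let C be a spanning subgraph of a graph G on V such that κ(x,y;C) ≥ min{κ(x,y;G), k} for all vertices x, y ∈ V. Then every l-separator S of C with l < k is an l-separator of G. -/

import Mathlib

/-!
Suppose `x, y ∉ S` are adjacent in `G` but not joined in `C - S`. Then every `x`–`y` path of `C`
meets `S`, so `κ(x,y;C) ≤ |S| < k`. The edge `xy` is not in `C`, so adding it to a maximum
family of internally disjoint `C`-paths gives `κ(x,y;G) ≥ κ(x,y;C) + 1`, and
`min{κ(x,y;G), k} > κ(x,y;C)` is a contradiction. Hence `C - S` and `G - S` have the same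
components, whereas the spanning subgraph `C` has at least as many components as `G`.
-/

/-- The local vertex-connectivity `κ(x,y;G)`: the maximum number of pairwise
internally vertex-disjoint paths between `x` and `y` in `G`. -/
noncomputable def localVertexConn {V : Type*} (G : SimpleGraph V) (x y : V) : ℕ :=
  sSup {n : ℕ | ∃ P : Fin n → G.Path x y, Function.Injective P ∧
    Pairwise fun i j => ∀ v, v ∈ (P i).1.support → v ∈ (P j).1.support → v = x ∨ v = y}

/-- `S` is an `l`-separator of `G`: `|S| = l` and removing the vertices of `S`
(together with all incident edges) leaves a graph with more connected components
than `G`. -/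
def IsSeparator {V : Type*} (G : SimpleGraph V) (S : Finset V) (l : ℕ) : Prop :=
  S.card = l ∧
    Nat.card G.ConnectedComponent <
      Nat.card (G.induce ((S : Set V)ᶜ)).ConnectedComponent

namespace SimpleGraph

variable {V : Type*}

theorem Reachable.mono_of_forall_adj {G H : SimpleGraph V}
    (h : ∀ u v, G.Adj u v → H.Reachable u v) {u v : V} (huv : G.Reachable u v) :
    H.Reachable u v := by
  rw [reachable_eq_reflTransGen] at h huv ⊢
  exact Relation.reflTransGen_closed h _ _ huv

theorem ConnectedComponent.card_eq_of_le_of_forall_adj {G H : SimpleGraph V} (hle : G ≤ H)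
    (h : ∀ u v, H.Adj u v → G.Reachable u v) :
    Nat.card G.ConnectedComponent = Nat.card H.ConnectedComponent :=
  Nat.card_congr <| Quot.congrRight fun _ _ => ⟨fun huv => huv.mono hle,
    Reachable.mono_of_forall_adj h⟩

instance Path.instFinite [Finite V] {G : SimpleGraph V} {x y : V} : Finite (G.Path x y) := by
  have := Fintype.ofFinite V
  classical
  infer_instance

variable {G : SimpleGraph V} {x y : V}

def PathsInternallyDisjoint {ι : Type*} (P : ι → G.Path x y) : Prop :=
  Pairwise fun i j => ∀ v, v ∈ (P i).1.support → v ∈ (P j).1.support → v = x ∨ v = y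

theorem PathsInternallyDisjoint.cons {n : ℕ} {P : Fin n → G.Path x y}
    (hP : PathsInternallyDisjoint P) {Q : G.Path x y} (hQ : ∀ v ∈ Q.1.support, v = x ∨ v = y) :
    PathsInternallyDisjoint (Fin.cons Q P : Fin (n + 1) → G.Path x y) := by
  intro i j hij v hi hj
  cases i using Fin.cases <;> cases j using Fin.cases
  · exact absurd rfl hij
  · exact hQ v hi
  · exact hQ v hj
  · exact hP (fun h => hij (congrArg Fin.succ h)) v hi hj

theorem PathsInternallyDisjoint.map_ofLE {H : SimpleGraph V} (hGH : G ≤ H) {ι : Type*}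
    {P : ι → G.Path x y} (hP : PathsInternallyDisjoint P) :
    PathsInternallyDisjoint fun i => (P i).map (Hom.ofLE hGH) Function.injective_id := by
  intro i j hij v
  simpa [Walk.support_map] using hP hij v

def disjointPathCounts (G : SimpleGraph V) (x y : V) : Set ℕ :=
  {n | ∃ P : Fin n → G.Path x y, Function.Injective P ∧ PathsInternallyDisjoint P}

theorem localVertexConn_eq_sSup : localVertexConn G x y = sSup (G.disjointPathCounts x y) := rfl

theorem zero_mem_disjointPathCounts : 0 ∈ G.disjointPathCounts x y :=
  ⟨finZeroElim, fun i => i.elim0, fun i => i.elim0⟩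

theorem bddAbove_disjointPathCounts [Finite V] : BddAbove (G.disjointPathCounts x y) :=
  ⟨Nat.card (G.Path x y), fun n ⟨P, hP, _⟩ => by simpa using Nat.card_le_card_of_injective P hP⟩

theorem le_localVertexConn [Finite V] {n : ℕ} {P : Fin n → G.Path x y}
    (hP : Function.Injective P) (hd : PathsInternallyDisjoint P) : n ≤ localVertexConn G x y :=
  localVertexConn_eq_sSup ▸ le_csSup bddAbove_disjointPathCounts ⟨P, hP, hd⟩

theorem exists_paths_localVertexConn [Finite V] :
    ∃ P : Fin (localVertexConn G x y) → G.Path x y,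
      Function.Injective P ∧ PathsInternallyDisjoint P := by
  rw [localVertexConn_eq_sSup]
  exact Nat.sSup_mem ⟨0, zero_mem_disjointPathCounts⟩ bddAbove_disjointPathCounts

theorem localVertexConn_le_card_of_forall_walk {S : Finset V} (hx : x ∉ S) (hy : y ∉ S)
    (hS : ∀ w : G.Walk x y, ∃ z ∈ w.support, z ∈ S) : localVertexConn G x y ≤ S.card := by
  rw [localVertexConn_eq_sSup]
  refine csSup_le ⟨0, zero_mem_disjointPathCounts⟩ ?_
  rintro n ⟨P, -, hd⟩
  choose f hf hfS using fun i => hS (P i).1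
  have hinj : Set.InjOn f (Finset.univ : Finset (Fin n)) := by
    intro i _ j _ hij
    by_contra hne
    rcases hd hne (f i) (hf i) (hij ▸ hf j) with h | h
    · exact hx (h ▸ hfS i)
    · exact hy (h ▸ hfS i)
  simpa using Finset.card_le_card_of_injOn f (fun i _ => hfS i) hinj

theorem localVertexConn_add_one_le_of_adj [Finite V] {C : SimpleGraph V} (hCG : C ≤ G)
    (hG : G.Adj x y) (hC : ¬ C.Adj x y) : localVertexConn C x y + 1 ≤ localVertexConn G x y := by
  obtain ⟨P, hP, hd⟩ := exists_paths_localVertexConn (G := C) (x := x) (y := y)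
  let P' := fun i => (P i).map (Hom.ofLE hCG) Function.injective_id
  have hnew : Path.singleton hG ∉ Set.range P' := by
    rintro ⟨i, hi⟩
    have hxy : s(x, y) ∈ (P' i).1.edges := hi ▸ Path.mk'_mem_edges_singleton hG
    simp only [P', Path.map_coe, Walk.edges_map, Hom.coe_ofLE, Sym2.map_id, List.map_id] at hxy
    exact hC ((P i).1.edges_subset_edgeSet hxy)
  refine le_localVertexConn
    (Fin.cons_injective_of_injective hnew ((Path.map_injective Function.injective_id x y).comp hP))
    ((hd.map_ofLE hCG).cons fun v hv => ?_)
  simpa using hv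

theorem reachable_induce_compl_of_adj [Finite V] {C : SimpleGraph V} {k : ℕ} (hCG : C ≤ G)
    (hκ : ∀ x y, min (localVertexConn G x y) k ≤ localVertexConn C x y)
    {S : Finset V} (hS : S.card < k) {u v : ((S : Set V)ᶜ : Set V)}
    (huv : (G.induce (S : Set V)ᶜ).Adj u v) : (C.induce (S : Set V)ᶜ).Reachable u v := by
  by_contra hCS
  have hmeet : ∀ w : C.Walk u v, ∃ z ∈ w.support, z ∈ S := fun w => by
    by_contra! hw
    exact hCS ⟨w.induce _ hw⟩
  have hC : ¬ C.Adj u v := fun h => hCS (induce_adj.mpr h).reachable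
  have hle := localVertexConn_le_card_of_forall_walk u.2 v.2 hmeet
  have hlt := localVertexConn_add_one_le_of_adj hCG (induce_adj.mp huv) hC
  have := hκ u v
  omega

end SimpleGraph

theorem stmt_1_general {V : Type*} [Fintype V] (k : ℕ)
    (G C : SimpleGraph V) (hCG : C ≤ G)
    (hκ : ∀ x y : V, min (localVertexConn G x y) k ≤ localVertexConn C x y)
    (S : Finset V) (l : ℕ) (hl : l < k) (hsep : IsSeparator C S l) :
    IsSeparator G S l := by
  obtain ⟨hcard, hlt⟩ := hsep
  refine ⟨hcard, ?_⟩
  have hinduce : Nat.card (C.induce (S : Set V)ᶜ).ConnectedComponent =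
      Nat.card (G.induce (S : Set V)ᶜ).ConnectedComponent :=
    SimpleGraph.ConnectedComponent.card_eq_of_le_of_forall_adj (SimpleGraph.comap_monotone _ hCG)
      fun _ _ => SimpleGraph.reachable_induce_compl_of_adj hCG hκ (hcard ▸ hl)
  calc Nat.card G.ConnectedComponent ≤ Nat.card C.ConnectedComponent :=
        SimpleGraph.ConnectedComponent.card_le_card_of_le hCG
    _ < _ := hlt
    _ = _ := hinduce

/-- If `C` is a spanning subgraph of `G` with `κ(x,y;C) ≥ min{κ(x,y;G), k}` for all
vertices `x, y`, then every `l`-separator `S` of `C` with `l < k` is an `l`-separator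
of `G`. -/
theorem stmt_1 {V : Type*} [Fintype V] (k : ℕ) (hk : 0 < k)
    (G C : SimpleGraph V) (hCG : C ≤ G)
    (hκ : ∀ x y : V, min (localVertexConn G x y) k ≤ localVertexConn C x y)
    (S : Finset V) (l : ℕ) (hl : l < k) (hsep : IsSeparator C S l) :
    IsSeparator G S l :=
  stmt_1_general k G C hCG hκ S l hl hsep
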